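/- arXiv:1701.06386 — 4 statements merged into one kernel-verified Lean document; each statement's English description precedes it below -/
import Mathlib

section
/- For all sufficiently large natural numbers x, the number of primes between x/e and x is strictly greater than x/(3·ln x); that is, there exists x₀ such that for all natural numbers x ≥ x₀ one has π(x) − π(⌊x/e⌋) > x/(3·ln x). -/
/-!
Chebyshev's method. Since `log n! = ∑_{d ≤ n} Λ(d) ⌊n/d⌋`, the combination
`log N! - log ⌊N/2⌋! - log ⌊N/3⌋! - log ⌊N/5⌋! + log ⌊N/30⌋!` equals `∑_{d ≤ N} Λ(d) w(⌊N/d⌋)`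
with `w(m) = m - ⌊m/2⌋ - ⌊m/3⌋ - ⌊m/5⌋ + ⌊m/30⌋ ≤ 1`, so it is at most `ψ(N)`. Stirling's formula
evaluates it as `A N + O(log N)` with `A = log 2/2 + log 3/3 + log 5/5 - log 30/30 ≈ 0.921`,
whence `θ(N) ≥ ψ(N) - O(√N log N) > 0.85 N` eventually, while `θ(N/e) ≤ (log 4 / e) N < 0.51 N`.
Each prime in `(N/e, N]` contributes at most `log N` to `θ(N) - θ(N/e) > N/3`.
-/

open Real Finset Chebyshev Asymptotics Filter
open ArithmeticFunction hiding log
open scoped Nat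

theorem sum_Ioc_log_eq_log_factorial (N : ℕ) : ∑ n ∈ Ioc 0 N, log n = log N ! := by
  induction N with
  | zero => simp
  | succ N ih =>
    rw [sum_Ioc_succ_top N.zero_le, ih, Nat.factorial_succ, Nat.cast_mul,
      log_mul (by positivity) (by positivity), add_comm]

theorem sum_vonMangoldt_mul_div_eq_log_factorial (N : ℕ) :
    ∑ d ∈ Ioc 0 N, Λ d * ((N / d : ℕ) : ℝ) = log N ! := by
  rw [← sum_Ioc_mul_zeta_eq_sum, vonMangoldt_mul_zeta, ← sum_Ioc_log_eq_log_factorial]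
  simp only [ArithmeticFunction.log_apply]

theorem sum_vonMangoldt_mul_div_div_eq_log_factorial (N k : ℕ) :
    ∑ d ∈ Ioc 0 N, Λ d * ((N / d / k : ℕ) : ℝ) = log (N / k)! := by
  rw [← sum_vonMangoldt_mul_div_eq_log_factorial]
  simp_rw [Nat.div_right_comm N _ k]
  symm
  refine sum_subset (Ioc_subset_Ioc_right (N.div_le_self k)) fun d hd hdk => ?_
  simp only [mem_Ioc, not_and, not_le] at hd hdk
  simp [Nat.div_eq_of_lt (hdk hd.1)]

theorem chebyshev_weight_le_one (m : ℕ) :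
    (m : ℝ) - (m / 2 : ℕ) - (m / 3 : ℕ) - (m / 5 : ℕ) + (m / 30 : ℕ) ≤ 1 := by
  have h : m + m / 30 ≤ 1 + m / 2 + m / 3 + m / 5 := by omega
  have := (Nat.cast_le (α := ℝ)).mpr h
  push_cast at this
  linarith

theorem log_factorial_combination_le_psi (N : ℕ) :
    log N ! - log (N / 2)! - log (N / 3)! - log (N / 5)! + log (N / 30)! ≤ ψ N := by
  rw [← sum_vonMangoldt_mul_div_eq_log_factorial,
    ← sum_vonMangoldt_mul_div_div_eq_log_factorial N 2,
    ← sum_vonMangoldt_mul_div_div_eq_log_factorial N 3,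
    ← sum_vonMangoldt_mul_div_div_eq_log_factorial N 5,
    ← sum_vonMangoldt_mul_div_div_eq_log_factorial N 30, psi, Nat.floor_natCast]
  simp only [← sum_sub_distrib, ← sum_add_distrib, ← mul_sub, ← mul_add]
  refine sum_le_sum fun d _ => ?_
  simpa using mul_le_mul_of_nonneg_left (chebyshev_weight_le_one (N / d)) vonMangoldt_nonneg

noncomputable def stirlingTerm (x : ℝ) : ℝ := x * log x - x

theorem stirlingTerm_le_log_factorial (n : ℕ) : stirlingTerm n ≤ log n ! := by
  rcases eq_or_ne n 0 with rfl | hn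
  · simp [stirlingTerm]
  have h2π : 1 ≤ 2 * π := by linarith [pi_gt_three]
  have hn1 : (1 : ℝ) ≤ n := Nat.one_le_cast.mpr (Nat.one_le_iff_ne_zero.mpr hn)
  have := Stirling.le_log_factorial_stirling hn
  have := log_nonneg h2π
  have := log_nonneg hn1
  unfold stirlingTerm
  linarith

theorem log_factorial_le_stirlingTerm (n : ℕ) : log n ! ≤ stirlingTerm n + log n / 2 + 1 := by
  rcases eq_or_ne n 0 with rfl | hn
  · simp [stirlingTerm]
  obtain ⟨m, rfl⟩ := Nat.exists_eq_succ_of_ne_zero hn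
  have hs : Stirling.stirlingSeq (m + 1) ≤ exp 1 / √2 :=
    Stirling.stirlingSeq_one ▸ Stirling.stirlingSeq'_antitone (Nat.zero_le m)
  have hlog := log_le_log (Stirling.stirlingSeq'_pos m) hs
  rw [Stirling.log_stirlingSeq_formula, log_div (exp_pos 1).ne' (by positivity), log_exp,
    log_sqrt zero_le_two, log_mul two_ne_zero (by positivity),
    log_div (by positivity) (exp_pos 1).ne', log_exp] at hlog
  unfold stirlingTerm
  linarith

theorem stirlingTerm_sub_le {x y : ℝ} (hx : 0 < x) (hxy : x ≤ y) :
    stirlingTerm y - stirlingTerm x ≤ (y - x) * log y := by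
  have hy : 0 < y := hx.trans_le hxy
  have h := log_le_sub_one_of_pos (div_pos hy hx)
  rw [log_div hy.ne' hx.ne'] at h
  have : x * (log y - log x) ≤ y - x := by
    calc x * (log y - log x) ≤ x * (y / x - 1) := by gcongr
      _ = y - x := by field_simp
  unfold stirlingTerm
  linarith

theorem le_stirlingTerm_sub {x y : ℝ} (hx : 0 < x) (hxy : x ≤ y) :
    (y - x) * log x ≤ stirlingTerm y - stirlingTerm x := by
  have hy : 0 < y := hx.trans_le hxy
  have h := one_sub_inv_le_log_of_pos (div_pos hy hx)
  rw [log_div hy.ne' hx.ne', inv_div] at h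
  have : y - x ≤ y * (log y - log x) := by
    calc y - x = y * (1 - x / y) := by field_simp
      _ ≤ y * (log y - log x) := by gcongr
  unfold stirlingTerm
  linarith

theorem stirlingTerm_monotoneOn : MonotoneOn stirlingTerm (Set.Ici 1) := fun x hx y _ hxy => by
  have hx : (1 : ℝ) ≤ x := hx
  have := le_stirlingTerm_sub (by linarith) hxy
  nlinarith [log_nonneg hx]

theorem log_factorial_div_le {N k : ℕ} (hk : k ≠ 0) (hkN : k ≤ N) :
    log (N / k)! ≤ stirlingTerm ((N : ℝ) / k) + log N / 2 + 1 := by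
  have hdiv : (1 : ℝ) ≤ (N / k : ℕ) := Nat.one_le_cast.mpr (Nat.div_pos hkN hk.bot_lt)
  have hle : ((N / k : ℕ) : ℝ) ≤ (N : ℝ) / k := Nat.cast_div_le
  have hlog : log (N / k : ℕ) ≤ log N := log_le_log (by linarith) (by exact_mod_cast N.div_le_self k)
  have := stirlingTerm_monotoneOn hdiv (hdiv.trans hle) hle
  linarith [log_factorial_le_stirlingTerm (N / k)]

theorem stirlingTerm_sub_log_le_log_factorial_div {N k : ℕ} (hk : k ≠ 0) (hkN : k ≤ N) :
    stirlingTerm ((N : ℝ) / k) - log N ≤ log (N / k)! := by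
  have hdiv : (1 : ℝ) ≤ (N / k : ℕ) := Nat.one_le_cast.mpr (Nat.div_pos hkN hk.bot_lt)
  have hle : ((N / k : ℕ) : ℝ) ≤ (N : ℝ) / k := Nat.cast_div_le
  have hlt : (N : ℝ) / k < (N / k : ℕ) + 1 := by
    rw [← Nat.floor_div_eq_div (K := ℝ)]; exact Nat.lt_floor_add_one _
  have hlog : log ((N : ℝ) / k) ≤ log N :=
    log_le_log (by linarith) (div_le_self N.cast_nonneg (Nat.one_le_cast.mpr hk.bot_lt))
  have := stirlingTerm_sub_le (by linarith) hle
  have := log_nonneg (hdiv.trans hle)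
  nlinarith [stirlingTerm_le_log_factorial (N / k)]

noncomputable def chebyshevConst : ℝ := log 2 / 2 + log 3 / 3 + log 5 / 5 - log 30 / 30

theorem stirlingTerm_combination {x : ℝ} (hx : 0 < x) :
    stirlingTerm x - stirlingTerm (x / 2) - stirlingTerm (x / 3) - stirlingTerm (x / 5)
      + stirlingTerm (x / 30) = chebyshevConst * x := by
  unfold stirlingTerm chebyshevConst
  simp only [log_div hx.ne' (by norm_num : (2 : ℝ) ≠ 0), log_div hx.ne' (by norm_num : (3 : ℝ) ≠ 0),
    log_div hx.ne' (by norm_num : (5 : ℝ) ≠ 0), log_div hx.ne' (by norm_num : (30 : ℝ) ≠ 0)]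
  ring

theorem chebyshevConst_mul_sub_le_psi {N : ℕ} (hN : 30 ≤ N) :
    chebyshevConst * N - 5 / 2 * log N - 3 ≤ ψ N := by
  have h2 := log_factorial_div_le (N := N) (k := 2) two_ne_zero (by omega)
  have h3 := log_factorial_div_le (N := N) (k := 3) three_ne_zero (by omega)
  have h5 := log_factorial_div_le (N := N) (k := 5) (by norm_num) (by omega)
  have h30 := stirlingTerm_sub_log_le_log_factorial_div (N := N) (k := 30) (by norm_num) hN
  have hN := stirlingTerm_le_log_factorial N
  have := stirlingTerm_combination (x := N) (by positivity)
  push_cast at h2 h3 h5 h30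
  linarith [log_factorial_combination_le_psi N]

theorem chebyshevConst_gt_d2 : 0.92 < chebyshevConst := by
  have h30 : log 30 = log 2 + log 3 + log 5 := by
    rw [show (30 : ℝ) = 2 * 3 * 5 by norm_num, log_mul (by norm_num) (by norm_num),
      log_mul (by norm_num) (by norm_num)]
  unfold chebyshevConst
  linarith [log_two_gt_d9, log_three_gt_d9, log_five_gt_d9]

theorem log_four_div_exp_one_lt_d2 : log 4 / exp 1 < 0.51 := by
  have h4 : log 4 = 2 * log 2 := by
    rw [show (4 : ℝ) = 2 ^ 2 by norm_num, log_pow, Nat.cast_ofNat]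
  rw [div_lt_iff₀ (exp_pos 1), h4]
  linarith [log_two_lt_d9, exp_one_gt_d9]

theorem isLittleO_sqrt_mul_log_add_log_add_const (a b c : ℝ) :
    (fun x : ℝ => a * √x * log x + b * log x + c) =o[atTop] id := by
  have hlog : log =o[atTop] sqrt := by
    simpa only [← sqrt_eq_rpow] using isLittleO_log_rpow_atTop one_half_pos
  have hsqrt : (fun x => √x * log x) =o[atTop] id :=
    ((isBigO_refl sqrt atTop).mul_isLittleO hlog).congr' (by rfl)
      (eventually_ge_atTop 0 |>.mono fun x hx => mul_self_sqrt hx)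
  have := ((hsqrt.const_mul_left a).add (isLittleO_log_id_atTop.const_mul_left b)).add
    (isLittleO_const_id_atTop c)
  simpa only [mul_assoc] using this

theorem eventually_div_three_lt_theta_sub_theta :
    ∀ᶠ N : ℕ in atTop, (N : ℝ) / 3 < θ N - θ (N / exp 1) := by
  have herr := tendsto_natCast_atTop_atTop.eventually
    ((isLittleO_sqrt_mul_log_add_log_add_const 2 (5 / 2) 3).bound (show (0 : ℝ) < 0.07 by norm_num))
  filter_upwards [herr, eventually_ge_atTop 30] with N herr hN
  have hN1 : (1 : ℝ) ≤ N := by exact_mod_cast (show 1 ≤ N by omega)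
  have hpsi := chebyshevConst_mul_sub_le_psi hN
  have hdiff := psi_sub_theta_le hN1
  have hθ := theta_le_log4_mul_x (x := N / exp 1) (by positivity)
  have hA : 0.92 * (N : ℝ) ≤ chebyshevConst * N := by gcongr; exact chebyshevConst_gt_d2.le
  have hB : log 4 * (N / exp 1) ≤ 0.51 * N := by
    calc log 4 * (N / exp 1) = log 4 / exp 1 * N := by ring
      _ ≤ 0.51 * N := by gcongr; exact log_four_div_exp_one_lt_d2.le
  rw [id, Real.norm_of_nonneg, Real.norm_of_nonneg (by positivity)] at herr
  · linarith
  · have := log_nonneg hN1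
    positivity

theorem theta_sub_theta_le_mul_log {x y : ℝ} (hxy : x ≤ y) :
    θ y - θ x ≤ ((Nat.primeCounting ⌊y⌋₊ : ℝ) - Nat.primeCounting ⌊x⌋₊) * log y := by
  have hsub : Nat.primesLE ⌊x⌋₊ ⊆ Nat.primesLE ⌊y⌋₊ := Nat.primesLE_mono (Nat.floor_mono hxy)
  rw [theta_eq_sum_primesLE, theta_eq_sum_primesLE, ← sum_sdiff hsub, add_sub_cancel_right,
    ← Nat.primesLE_card_eq_primeCounting, ← Nat.primesLE_card_eq_primeCounting,
    ← Nat.cast_sub (card_le_card hsub), ← card_sdiff_of_subset hsub, ← nsmul_eq_mul]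
  refine sum_le_card_nsmul _ _ _ fun p hp => ?_
  have hp := (mem_sdiff.mp hp).1
  have hp0 : p ≠ 0 := (Nat.prime_of_mem_primesLE hp).ne_zero
  exact log_le_log (by positivity) ((Nat.le_floor_iff' hp0).mp (Nat.le_of_mem_primesLE hp))

/-- For all sufficiently large natural numbers `x`, the number of primes between `x/e`
and `x` is strictly greater than `x / (3 * ln x)`. -/
theorem primes_between_div_e_lower_bound :
    ∃ x₀ : ℕ, ∀ x : ℕ, x ≥ x₀ →
      ((Nat.primeCounting x : ℝ) - (Nat.primeCounting ⌊(x : ℝ) / Real.exp 1⌋₊ : ℝ))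
        > (x : ℝ) / (3 * Real.log x) := by
  obtain ⟨x₀, hx₀⟩ := eventually_atTop.mp eventually_div_three_lt_theta_sub_theta
  refine ⟨max x₀ 2, fun N hN => ?_⟩
  have hlog : 0 < log N := log_pos (by exact_mod_cast (show 1 < N by omega))
  have hθ := theta_sub_theta_le_mul_log (div_le_self N.cast_nonneg (one_le_exp zero_le_one))
  rw [Nat.floor_natCast] at hθ
  rw [gt_iff_lt, div_lt_iff₀ (by positivity)]
  linarith [hx₀ N (le_of_max_le_left hN)]
end

section
/- For all sufficiently large natural numbers x, the product of all prime numbers p satisfying x/e < p ≤ x is at least (x/e)^(x/(3·ln x)); that is, there exists x₀ such that for all natural numbers x ≥ x₀, ∏_{p prime, x/e < p ≤ x} p ≥ (x/e)^(x/(3·ln x)) as real numbers. -/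
/-!
Chebyshev's method. Since `⌊k⌋ - ⌊k/2⌋ - ⌊k/3⌋ - ⌊k/5⌋ + ⌊k/30⌋ ≤ 1` for every `k`, Legendre's
formula shows that `n! (n/30)!` divides `(n/2)! (n/3)! (n/5)! lcm(1, …, n)`. Stirling's bounds turn
this into `ψ(n) ≥ c n - O(log n)` with `c = log 2/2 + log 3/3 + log 5/5 - log 30/30 ≈ 0.921`, hence
`θ(n) ≥ c n - O(√n log n)`. As `θ(n/e) ≤ (log 4 / e) n ≈ 0.51 n`, the product of the primes in
`(n/e, n]`, which is `exp (θ(n) - θ(n/e))`, eventually exceeds `exp (n/3) ≥ (n/e)^(n/(3 log n))`.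
-/

open Nat hiding log log_pow
open Finset Real Chebyshev Filter Asymptotics

theorem factorial_mul_factorial_div_thirty_dvd (n : ℕ) :
    n ! * (n / 30)! ∣ (n / 2)! * (n / 3)! * (n / 5)! * lcmUpto n := by
  rw [← factorization_le_iff_dvd (by positivity) (by have := lcmUpto_ne_zero n; positivity)]
  intro p
  by_cases hp : p.Prime
  swap
  · simp [factorization_eq_zero_of_not_prime _ hp]
  obtain ⟨b, hb⟩ : ∃ b, b = p.log n + 1 := ⟨_, rfl⟩
  have legendre {m : ℕ} (hm : m ≤ n) : (m !).factorization p = ∑ i ∈ Ico 1 b, m / p ^ i :=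
    factorization_factorial hp (hb ▸ Nat.lt_succ_of_le (log_mono_right hm))
  have hlog : p.log n = ∑ _i ∈ Ico 1 b, 1 := by simp [hb]
  simp only [Nat.factorization_mul, factorial_ne_zero, lcmUpto_ne_zero, mul_ne_zero_iff, ne_eq,
    not_false_eq_true, and_self, Finsupp.add_apply, factorization_lcmUpto n hp]
  rw [legendre le_rfl, legendre (div_le_self n 30), legendre (div_le_self n 2),
    legendre (div_le_self n 3), legendre (div_le_self n 5), hlog]
  simp only [← sum_add_distrib]
  refine sum_le_sum fun i _ ↦ ?_
  simp only [Nat.div_right_comm _ _ (p ^ i)]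
  omega

theorem log_factorial_le_stirling {n : ℕ} (hn : n ≠ 0) :
    log n ! ≤ n * log n - n + log n / 2 + 1 := by
  obtain ⟨m, rfl⟩ := exists_eq_add_one_of_ne_zero hn
  have hseq : Stirling.stirlingSeq (m + 1) ≤ exp 1 / √2 := by
    simpa using Stirling.stirlingSeq'_antitone (Nat.zero_le m)
  have hlog := log_le_log (Stirling.stirlingSeq'_pos m) hseq
  rw [Stirling.log_stirlingSeq_formula, log_div (exp_ne_zero 1) (by positivity), log_exp,
    log_sqrt zero_le_two, log_mul two_ne_zero (by positivity), log_div (by positivity)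
    (exp_ne_zero 1), log_exp] at hlog
  linarith

theorem mul_log_sub_self_le_of_le {s t : ℝ} (hs : 1 ≤ s) (hst : s ≤ t) :
    s * log s - s ≤ t * log t - t := by
  have ht : 0 < t := by linarith
  have tangent : 1 - s / t ≤ log t - log s := by
    rw [← log_div ht.ne' (by positivity), ← inv_div]
    exact one_sub_inv_le_log_of_pos (by positivity)
  have : t - s ≤ t * log t - t * log s := by
    have := mul_le_mul_of_nonneg_left tangent ht.le
    rwa [mul_sub, mul_one, mul_div_cancel₀ _ ht.ne', mul_sub] at this
  nlinarith [log_nonneg hs]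

theorem log_factorial_floor_le {t : ℝ} (ht : 1 ≤ t) :
    log ⌊t⌋₊ ! ≤ t * log t - t + log t / 2 + 1 := by
  have hm1 : 1 ≤ ⌊t⌋₊ := (one_le_floor_iff t).2 ht
  have hm : (1 : ℝ) ≤ ⌊t⌋₊ := mod_cast hm1
  have hmt : (⌊t⌋₊ : ℝ) ≤ t := floor_le (by linarith)
  grw [log_factorial_le_stirling (one_le_iff_ne_zero.1 hm1), mul_log_sub_self_le_of_le hm hmt,
    log_le_log (by linarith) hmt]

theorem le_log_factorial_floor {t : ℝ} (ht : 1 ≤ t) :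
    t * log t - t - log t / 2 ≤ log ⌊t⌋₊ ! := by
  set m := ⌊t⌋₊
  have htm : t ≤ m + 1 := (lt_floor_add_one t).le
  have hstirling := Stirling.le_log_factorial_stirling (n := m + 1) (succ_ne_zero m)
  push_cast [factorial_succ] at hstirling
  rw [log_mul (x := (m : ℝ) + 1) (by positivity) (by positivity)] at hstirling
  have hm2t : log (m + 1) ≤ log 2 + log t := by
    rw [← log_mul two_ne_zero (by positivity)]
    exact log_le_log (by positivity) (by linarith [floor_le (by linarith : 0 ≤ t)])
  have hpi : log 2 ≤ log (2 * π) := log_le_log two_pos (by linarith [pi_gt_three])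
  linarith [mul_log_sub_self_le_of_le ht htm]

theorem log_factorial_add_log_factorial_div_thirty_le (n : ℕ) :
    log n ! + log (n / 30)! ≤ log (n / 2)! + log (n / 3)! + log (n / 5)! + ψ n := by
  have hdvd := Nat.le_of_dvd (by have := lcmUpto_pos n; positivity)
    (factorial_mul_factorial_div_thirty_dvd n)
  have := log_le_log (by positivity) (Nat.cast_le (α := ℝ) |>.2 hdvd)
  push_cast at this
  simpa [log_mul, factorial_ne_zero, lcmUpto_ne_zero, psi_eq_log_lcmUpto] using this

theorem abs_log_factorial_div_sub_le {n d : ℕ} (hd : 0 < d) (hdn : d ≤ n) :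
    |log (n / d)! - (n / d * (log n - log d) - n / d)| ≤ log n / 2 + 1 := by
  have hd' : (0 : ℝ) < d := mod_cast hd
  have ht : 1 ≤ (n : ℝ) / d := by
    rw [le_div_iff₀ hd', one_mul]
    exact_mod_cast hdn
  have hn : (0 : ℝ) < n := mod_cast hd.trans_le hdn
  have hlog : log ((n : ℝ) / d) ≤ log n :=
    log_le_log (by positivity) (div_le_self hn.le (mod_cast hd))
  rw [abs_le, ← log_div hn.ne' hd'.ne', ← floor_div_eq_div (K := ℝ)]
  constructor <;> linarith [log_factorial_floor_le ht, le_log_factorial_floor ht]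

theorem psi_ge_chebyshev {n : ℕ} (hn : 30 ≤ n) :
    (log 2 / 2 + log 3 / 3 + log 5 / 5 - log 30 / 30) * n - 5 * (log n + 1) ≤ ψ n := by
  have bound (d : ℕ) (hd : 0 < d) (hdn : d ≤ n) := abs_le.1 (abs_log_factorial_div_sub_le hd hdn)
  obtain ⟨h1, -⟩ := bound 1 one_pos (by omega)
  obtain ⟨h30, -⟩ := bound 30 (by norm_num) hn
  obtain ⟨-, h2⟩ := bound 2 two_pos (by omega)
  obtain ⟨-, h3⟩ := bound 3 three_pos (by omega)
  obtain ⟨-, h5⟩ := bound 5 (by norm_num) (by omega)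
  simp only [Nat.div_one, cast_one, log_one, div_one, sub_zero] at h1
  push_cast at h2 h3 h5 h30
  have hlog : 0 ≤ log n := log_nonneg (mod_cast (by omega : 1 ≤ n))
  linarith [log_factorial_add_log_factorial_div_thirty_le n]

theorem theta_ge_chebyshev {n : ℕ} (hn : 30 ≤ n) :
    (log 2 / 2 + log 3 / 3 + log 5 / 5 - log 30 / 30) * n - 5 * (log n + 1) - 2 * √n * log n
      ≤ θ n := by
  linarith [psi_ge_chebyshev hn, psi_sub_theta_le (x := n) (mod_cast (by omega : 1 ≤ n))]

theorem log_four_div_exp_one_add_third_lt :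
    log 4 / exp 1 + 1 / 3 < log 2 / 2 + log 3 / 3 + log 5 / 5 - log 30 / 30 := by
  have hlog4 : log 4 = 2 * log 2 := by
    rw [show (4 : ℝ) = 2 ^ 2 by norm_num, log_pow, cast_ofNat]
  have hlog30 : log 30 = log 2 + log 3 + log 5 := by
    rw [show (30 : ℝ) = 2 * 3 * 5 by norm_num, log_mul (by norm_num) (by norm_num),
      log_mul (by norm_num) (by norm_num)]
  have hlog3 := log_le_log (by norm_num) (by norm_num : (2 : ℝ) ^ 3 ≤ 3 ^ 2)
  have hlog5 := log_le_log (by norm_num) (by norm_num : (2 : ℝ) ^ 2 ≤ 5)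
  rw [Real.log_pow, Real.log_pow] at hlog3
  rw [Real.log_pow] at hlog5
  push_cast at hlog3 hlog5
  have he : log 4 / exp 1 < 0.5101 := by
    rw [div_lt_iff₀ (exp_pos 1), hlog4]
    nlinarith [log_two_lt_d9, exp_one_gt_d9]
  linarith [log_two_gt_d9]

theorem isLittleO_sqrt_mul_log_id : (fun x ↦ √x * log x) =o[atTop] id := by
  refine ((isBigO_refl Real.sqrt atTop).mul_isLittleO
    (isLittleO_log_rpow_atTop one_half_pos)).congr' .rfl ?_
  filter_upwards [eventually_ge_atTop 0] with x hx
  rw [← sqrt_eq_rpow, mul_self_sqrt hx, id]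

theorem eventually_self_div_three_le_theta_sub :
    ∀ᶠ n : ℕ in atTop, (n : ℝ) / 3 ≤ θ n - θ (n / exp 1) := by
  have herr : (fun x ↦ 5 * (log x + 1) + 2 * (√x * log x)) =o[atTop] id :=
    ((isLittleO_log_id_atTop.add (isLittleO_const_id_atTop 1)).const_mul_left 5).add
      (isLittleO_sqrt_mul_log_id.const_mul_left 2)
  have hbound := herr.bound (sub_pos.2 log_four_div_exp_one_add_third_lt)
  filter_upwards [tendsto_natCast_atTop_atTop.eventually hbound, eventually_ge_atTop 30]
    with n hn h30
  have hθ := theta_le_log4_mul_x (x := n / exp 1) (by positivity)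
  rw [norm_of_nonneg (by positivity), id, norm_natCast] at hn
  have hdiv : log 4 * (n / exp 1) = log 4 / exp 1 * n := by ring
  linarith [theta_ge_chebyshev h30]

theorem prod_primes_filter_lt_eq_exp_theta_sub {n : ℕ} {y : ℝ} (hy : y ≤ n) :
    ∏ p ∈ (range (n + 1)).filter (fun p : ℕ ↦ p.Prime ∧ y < p), (p : ℝ) = exp (θ n - θ y) := by
  have hcompl : (primesLE n).filter (fun p : ℕ ↦ ¬ y < p) = primesLE ⌊y⌋₊ := by
    ext p
    simp only [mem_filter, mem_primesLE, not_lt]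
    constructor
    · rintro ⟨⟨-, hp⟩, hpy⟩
      exact ⟨le_floor hpy, hp⟩
    · rintro ⟨hpy, hp⟩
      have hpy' : (p : ℝ) ≤ y := (le_floor_iff' hp.ne_zero).1 hpy
      exact ⟨⟨mod_cast hpy'.trans hy, hp⟩, hpy'⟩
  rw [theta_eq_sum_primesLE_log, theta_eq_sum_primesLE, ← hcompl,
    ← sum_filter_add_sum_filter_not (primesLE n) (fun p : ℕ ↦ y < p), add_sub_cancel_right,
    exp_sum, primesLE_eq_filter_range, filter_filter]
  exact prod_congr rfl fun p hp ↦ (exp_log (by simp_all [Nat.Prime.pos])).symm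

theorem div_exp_one_rpow_div_log_le {x t : ℝ} (hx : 1 < x) (ht : 0 ≤ t) :
    (x / exp 1) ^ (t / log x) ≤ exp t := by
  have hlog := log_pos hx
  rw [rpow_def_of_pos (by positivity), log_div (by positivity) (exp_ne_zero 1), log_exp,
    exp_le_exp, mul_div_assoc', div_le_iff₀ hlog]
  nlinarith

open scoped Classical in
/-- For all sufficiently large natural numbers `x`, the product of all primes `p` with
`x/e < p ≤ x` is at least `(x/e)^(x/(3·ln x))`. -/
theorem primorial_between_div_e_lower_bound :
    ∃ x₀ : ℕ, ∀ x : ℕ, x ≥ x₀ →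
      (∏ p ∈ (Finset.range (x + 1)).filter
          (fun p : ℕ => p.Prime ∧ (x : ℝ) / Real.exp 1 < (p : ℝ)), (p : ℝ))
        ≥ ((x : ℝ) / Real.exp 1) ^ ((x : ℝ) / (3 * Real.log x)) := by
  obtain ⟨x₀, hx₀⟩ := eventually_atTop.1
    (eventually_self_div_three_le_theta_sub.and (eventually_ge_atTop 2))
  refine ⟨x₀, fun x hx ↦ ?_⟩
  obtain ⟨hθ, hx2⟩ := hx₀ x hx
  have hx1 : (1 : ℝ) < x := by exact_mod_cast hx2
  rw [prod_primes_filter_lt_eq_exp_theta_sub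
    (div_le_self (by positivity) (one_le_exp zero_le_one))]
  calc ((x : ℝ) / exp 1) ^ ((x : ℝ) / (3 * log x))
      = ((x : ℝ) / exp 1) ^ ((x / 3 : ℝ) / log x) := by rw [div_div]
    _ ≤ exp (x / 3) := div_exp_one_rpow_div_log_le hx1 (by positivity)
    _ ≤ exp (θ x - θ (x / exp 1)) := exp_le_exp.2 hθ
end

section
/- Let S be a finite set of natural numbers each of which is prime, and let p ∈ S. Then p does not divide the natural number ∑_{q ∈ S} ∏_{r ∈ S, r ≠ q} r (the sum over q ∈ S of the product of all elements of S other than q). -/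
/-- If `S` is a finite set of primes and `p ∈ S`, then `p` does not divide
`∑_{q ∈ S} ∏_{r ∈ S.erase q}, r`. -/
theorem prime_not_dvd_sum_prod_erase (S : Finset ℕ) (hS : ∀ p ∈ S, Nat.Prime p)
    (p : ℕ) (hp : p ∈ S) :
    ¬ p ∣ ∑ q ∈ S, ∏ r ∈ S.erase q, r := by
  intro h
  rw [← Finset.add_sum_erase S _ hp] at h
  have h1 : p ∣ ∑ q ∈ S.erase p, ∏ r ∈ S.erase q, r :=
    Finset.dvd_sum fun q hq =>
      Finset.dvd_prod_of_mem _ (Finset.mem_erase.mpr ⟨(Finset.ne_of_mem_erase hq).symm, hp⟩)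
  have h2 : p ∣ ∏ r ∈ S.erase p, r := (Nat.dvd_add_right h1).mp (by rwa [add_comm] at h)
  obtain ⟨r, hr, hpr⟩ := (Nat.Prime.prime (hS p hp)).exists_mem_finset_dvd h2
  have : p = r := ((hS r (Finset.mem_of_mem_erase hr)).eq_one_or_self_of_dvd p hpr).resolve_left
    (hS p hp).ne_one
  exact Finset.ne_of_mem_erase hr this.symm
end

section
/- Let S be a nonempty finite set of natural numbers each of which is prime. Then the rational number ∑_{p ∈ S} 1/p, written in lowest terms, has denominator exactly ∏_{p ∈ S} p; in other words, the fraction (∑_{p ∈ S} ∏_{q ∈ S, q ≠ p} q) / (∏_{p ∈ S} p) cannot be simplified. -/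
/-!
Denominators of rationals multiply under addition as soon as they are coprime: `q` and `r` are
recovered from `q + r` by subtracting the other summand, so `q.den ∣ (q + r).den * r.den` and
symmetrically. Distinct primes are coprime and `1 / p` has denominator `p`.
-/

namespace Rat

theorem den_add_of_coprime {q r : ℚ} (h : Nat.Coprime q.den r.den) :
    (q + r).den = q.den * r.den := by
  refine Nat.dvd_antisymm (add_den_dvd q r) (h.mul_dvd_of_dvd_of_dvd ?_ ?_)
  · have hq : q.den ∣ (q + r).den * r.den := by
      simpa only [add_sub_cancel_right] using sub_den_dvd (q + r) r
    exact h.dvd_of_dvd_mul_right hq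
  · have hr : r.den ∣ (q + r).den * q.den := by
      simpa only [add_sub_cancel_left] using sub_den_dvd (q + r) q
    exact h.symm.dvd_of_dvd_mul_right hr

open Function in
theorem den_sum_of_pairwise_coprime {ι : Type*} (s : Finset ι) (f : ι → ℚ)
    (h : (s : Set ι).Pairwise (Nat.Coprime on fun i ↦ (f i).den)) :
    (∑ i ∈ s, f i).den = ∏ i ∈ s, (f i).den := by
  classical
  induction s using Finset.induction_on with
  | empty => simp
  | insert a s has ih =>
    rw [Finset.coe_insert] at h
    have hcop : Nat.Coprime (f a).den (∑ i ∈ s, f i).den := by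
      rw [ih (h.mono (Set.subset_insert a _))]
      exact Nat.Coprime.prod_right fun i hi ↦
        h (Set.mem_insert a _) (Set.mem_insert_of_mem a hi) (ne_of_mem_of_not_mem hi has).symm
    rw [Finset.sum_insert has, Finset.prod_insert has, den_add_of_coprime hcop,
      ih (h.mono (Set.subset_insert a _))]

end Rat

theorem den_sum_one_div_primes_general (S : Finset ℕ)
    (hS : ∀ p ∈ S, Nat.Prime p) :
    (∑ p ∈ S, (1 : ℚ) / (p : ℚ)).den = ∏ p ∈ S, p := by
  have hden : ∀ p ∈ S, ((1 : ℚ) / p).den = p := fun p hp ↦ by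
    rw [one_div, Rat.inv_natCast_den_of_pos (hS p hp).pos]
  rw [Rat.den_sum_of_pairwise_coprime, Finset.prod_congr rfl hden]
  intro p hp q hq hpq
  simp only [Function.onFun, hden p hp, hden q hq]
  exact (Nat.coprime_primes (hS p hp) (hS q hq)).2 hpq

/-- If `S` is a nonempty finite set of primes, then `∑_{p ∈ S} 1/p` in lowest terms
has denominator exactly `∏_{p ∈ S} p`. -/
theorem den_sum_one_div_primes (S : Finset ℕ) (hne : S.Nonempty)
    (hS : ∀ p ∈ S, Nat.Prime p) :
    (∑ p ∈ S, (1 : ℚ) / (p : ℚ)).den = ∏ p ∈ S, p :=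
  den_sum_one_div_primes_general S hS
end
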